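/- Let X be a nonnegative random variable on a probability space, and let K > 0, t ≥ 0, z ≥ 0 be such that for every integer n ≥ 1 one has E[Xⁿ] ≤ zⁿ + ∑_{ℓ=1}^{n} (Kˡ (n!/(n−ℓ)!)² / ℓ!) · z^{n−ℓ} tˡ. Then there exists θ > 0 such that E[e^{θX}] < ∞. -/

import Mathlib

/-!
Since `(n)_ℓ² / ℓ! = ℓ! · C(n,ℓ)²`, the `ℓ`-th term of the moment bound (with `zⁿ` as the term
`ℓ = 0`) is at most `n! · C(n,ℓ)² · Mⁿ` for `M = max (K t) z`, and `∑ C(n,ℓ)² = C(2n,n) ≤ 4ⁿ`;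
hence `E[Xⁿ] ≤ n! (4M)ⁿ`. Integrating the exponential series termwise then bounds `E[e^{θX}]` by
the geometric series `∑ (4Mθ)ⁿ`, which converges for `θ < 1/(4M)`.
-/

open MeasureTheory Finset
open scoped Nat ENNReal

theorem Nat.descFactorial_sq_div_factorial (n ℓ : ℕ) :
    (n.descFactorial ℓ : ℝ) ^ 2 / ℓ ! = ℓ ! * (n.choose ℓ : ℝ) ^ 2 := by
  rw [Nat.descFactorial_eq_factorial_mul_choose]
  have : (ℓ ! : ℝ) ≠ 0 := by positivity
  push_cast
  field_simp

theorem entire_moment_term_le {K t z : ℝ} (hK : 0 ≤ K) (ht : 0 ≤ t) (hz : 0 ≤ z) {n ℓ : ℕ}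
    (hℓ : ℓ ≤ n) :
    K ^ ℓ * (n.descFactorial ℓ : ℝ) ^ 2 / ℓ ! * z ^ (n - ℓ) * t ^ ℓ ≤
      n ! * (n.choose ℓ : ℝ) ^ 2 * max (K * t) z ^ n := by
  have hpow : (K * t) ^ ℓ * z ^ (n - ℓ) ≤ max (K * t) z ^ n := by
    calc (K * t) ^ ℓ * z ^ (n - ℓ) ≤ max (K * t) z ^ ℓ * max (K * t) z ^ (n - ℓ) := by
          gcongr
          exacts [le_max_left _ _, le_max_right _ _]
      _ = max (K * t) z ^ n := by rw [← pow_add, Nat.add_sub_cancel' hℓ]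
  calc K ^ ℓ * (n.descFactorial ℓ : ℝ) ^ 2 / ℓ ! * z ^ (n - ℓ) * t ^ ℓ
      = ℓ ! * (n.choose ℓ : ℝ) ^ 2 * ((K * t) ^ ℓ * z ^ (n - ℓ)) := by
        rw [mul_div_assoc, Nat.descFactorial_sq_div_factorial]; ring
    _ ≤ n ! * (n.choose ℓ : ℝ) ^ 2 * max (K * t) z ^ n := by gcongr

theorem entire_moment_bound_le {K t z : ℝ} (hK : 0 ≤ K) (ht : 0 ≤ t) (hz : 0 ≤ z) (n : ℕ) :
    z ^ n + ∑ ℓ ∈ Icc 1 n, K ^ ℓ * (n.descFactorial ℓ : ℝ) ^ 2 / ℓ ! * z ^ (n - ℓ) * t ^ ℓ ≤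
      n ! * (4 * max (K * t) z) ^ n := by
  set f : ℕ → ℝ := fun ℓ ↦ K ^ ℓ * (n.descFactorial ℓ : ℝ) ^ 2 / ℓ ! * z ^ (n - ℓ) * t ^ ℓ
  have hsplit : z ^ n + ∑ ℓ ∈ Icc 1 n, f ℓ = ∑ ℓ ∈ range (n + 1), f ℓ := by
    rw [range_eq_Ico, sum_eq_sum_Ico_succ_bot n.succ_pos]
    simp [f, Ico_add_one_right_eq_Icc]
  have hcentral : ∑ ℓ ∈ range (n + 1), (n.choose ℓ : ℝ) ^ 2 ≤ 4 ^ n := by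
    exact_mod_cast (Nat.sum_range_choose_sq n).trans_le (Nat.centralBinom_le_four_pow n)
  calc z ^ n + ∑ ℓ ∈ Icc 1 n, f ℓ = ∑ ℓ ∈ range (n + 1), f ℓ := hsplit
    _ ≤ ∑ ℓ ∈ range (n + 1), n ! * (n.choose ℓ : ℝ) ^ 2 * max (K * t) z ^ n :=
        sum_le_sum fun ℓ hℓ ↦ entire_moment_term_le hK ht hz (mem_range_succ_iff.mp hℓ)
    _ = n ! * max (K * t) z ^ n * ∑ ℓ ∈ range (n + 1), (n.choose ℓ : ℝ) ^ 2 := by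
        rw [mul_sum]; congr! 1 with ℓ; ring
    _ ≤ n ! * max (K * t) z ^ n * 4 ^ n := by gcongr
    _ = n ! * (4 * max (K * t) z) ^ n := by ring

theorem ENNReal.ofReal_exp_eq_tsum {x : ℝ} (hx : 0 ≤ x) :
    ENNReal.ofReal (Real.exp x) = ∑' n : ℕ, ENNReal.ofReal (x ^ n / n !) := by
  rw [Real.exp_eq_exp_ℝ, NormedSpace.exp_eq_tsum_div]
  exact ENNReal.ofReal_tsum_of_nonneg (fun n ↦ by positivity) (Real.summable_pow_div_factorial x)

theorem lintegral_ofReal_exp_mul_le_of_moment_le {Ω : Type*} [MeasurableSpace Ω] {μ : Measure Ω}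
    {X : Ω → ℝ} (hX : Measurable X) (hX0 : ∀ ω, 0 ≤ X ω) {A : ℝ≥0∞}
    (hmom : ∀ n : ℕ, ∫⁻ ω, ENNReal.ofReal (X ω ^ n) ∂μ ≤ n ! * A ^ n) {θ : ℝ} (hθ : 0 ≤ θ) :
    ∫⁻ ω, ENNReal.ofReal (Real.exp (θ * X ω)) ∂μ ≤ (1 - ENNReal.ofReal θ * A)⁻¹ := by
  have hterm (n : ℕ) (x : ℝ) : ENNReal.ofReal ((θ * x) ^ n / n !) =
      ENNReal.ofReal (θ ^ n / n !) * ENNReal.ofReal (x ^ n) := by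
    rw [← ENNReal.ofReal_mul (by positivity), mul_pow, mul_div_right_comm]
  have hcoeff (n : ℕ) :
      ENNReal.ofReal (θ ^ n / n !) * (n ! * A ^ n) = (ENNReal.ofReal θ * A) ^ n := by
    rw [← mul_assoc, ← ENNReal.ofReal_natCast, ← ENNReal.ofReal_mul (by positivity),
      div_mul_cancel₀ _ (by positivity), ENNReal.ofReal_pow hθ, mul_pow]
  calc ∫⁻ ω, ENNReal.ofReal (Real.exp (θ * X ω)) ∂μ
      = ∑' n : ℕ, ENNReal.ofReal (θ ^ n / n !) * ∫⁻ ω, ENNReal.ofReal (X ω ^ n) ∂μ := by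
        simp_rw [ENNReal.ofReal_exp_eq_tsum (mul_nonneg hθ (hX0 _)), hterm]
        rw [lintegral_tsum fun n ↦ ((hX.pow_const n).ennreal_ofReal.const_mul _).aemeasurable]
        simp_rw [lintegral_const_mul _ (hX.pow_const _).ennreal_ofReal]
    _ ≤ ∑' n : ℕ, (ENNReal.ofReal θ * A) ^ n :=
        ENNReal.tsum_le_tsum fun n ↦ (mul_le_mul_right (hmom n) _).trans_eq (hcoeff n)
    _ = (1 - ENNReal.ofReal θ * A)⁻¹ := ENNReal.tsum_geometric _

/-- If the entire moments of a nonnegative random variable `X` satisfy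
`E[Xⁿ] ≤ zⁿ + ∑_{ℓ=1}^n Kˡ (n!/(n-ℓ)!)²/ℓ! · z^{n-ℓ} tˡ` for all `n ≥ 1`, then
`E[e^{θX}] < ∞` for some `θ > 0`. -/
theorem exists_exponential_moment
    {Ω : Type*} [MeasurableSpace Ω] (P : Measure Ω) [IsProbabilityMeasure P]
    (X : Ω → ℝ) (hX : Measurable X) (hX0 : ∀ ω, 0 ≤ X ω)
    (K t z : ℝ) (hK : 0 < K) (ht : 0 ≤ t) (hz : 0 ≤ z)
    (hmom : ∀ n : ℕ, 1 ≤ n →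
      ∫⁻ ω, ENNReal.ofReal ((X ω) ^ n) ∂P ≤
        ENNReal.ofReal (z ^ n + ∑ ℓ ∈ Finset.Icc 1 n,
          K ^ ℓ * ((n.descFactorial ℓ : ℝ)) ^ 2 / (Nat.factorial ℓ : ℝ)
            * z ^ (n - ℓ) * t ^ ℓ)) :
    ∃ θ : ℝ, 0 < θ ∧ ∫⁻ ω, ENNReal.ofReal (Real.exp (θ * X ω)) ∂P < ⊤ := by
  set a := 4 * max (K * t) z
  have ha : 0 ≤ a := by positivity
  have hmoments (n : ℕ) : ∫⁻ ω, ENNReal.ofReal (X ω ^ n) ∂P ≤ n ! * ENNReal.ofReal a ^ n := by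
    rcases Nat.eq_zero_or_pos n with rfl | hn
    · simp
    · refine (hmom n hn).trans ?_
      rw [← ENNReal.ofReal_pow ha, ← ENNReal.ofReal_natCast, ← ENNReal.ofReal_mul (by positivity)]
      exact ENNReal.ofReal_le_ofReal (entire_moment_bound_le hK.le ht hz n)
  have hθa : ENNReal.ofReal (1 / (a + 1)) * ENNReal.ofReal a < 1 := by
    rw [← ENNReal.ofReal_mul (by positivity), ENNReal.ofReal_lt_one, one_div_mul_eq_div,
      div_lt_one (by positivity)]
    linarith
  refine ⟨1 / (a + 1), by positivity, ?_⟩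
  exact (lintegral_ofReal_exp_mul_le_of_moment_le hX hX0 hmoments (by positivity)).trans_lt
    (ENNReal.inv_lt_top.mpr (tsub_pos_of_lt hθa))
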